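/- For g ≥ 3 and d ≥ 3, urSp(2g)[d] := ker(urSp(2g) → Sp(2g,ℤ/dℤ)) is normally generated in urSp(2g) by X_{1,2}^d and Y_{1,1}^d, assuming (Bass–Milnor–Serre) that Γ_d(g) is normally generated in GL(g,ℤ) by E_{1,2}^d. -/

import Mathlib

/-!
Every element of `urSp(2g)` factors as `[[A, 0], [0, ᵗA⁻¹]] * [[I, C], [0, I]]` with
`A ∈ GL(g, ℤ)` and `C` symmetric, and it has level `d` exactly when `A ∈ Γ_d(g)` and
`C ≡ 0 mod d`. The block-diagonal embedding of `GL(g, ℤ)` sends `E_{1,2}^d` to `X_{1,2}^d`, so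
Bass–Milnor–Serre puts the first factor in the normal closure. Conjugating `Y_{1,1}^d` by the
image of `P` gives `[[I, d • v vᵀ], [0, I]]` with `v` the first column of `P`; taking `v = eᵢ` and
`v = eᵢ + eⱼ`, these rank-one matrices generate all symmetric integer matrices as a group, which
puts the second factor in the normal closure as well.
-/

open Matrix

/-- The standard symplectic form matrix `J = [[0, I],[-I, 0]]`. -/
def Jmat (g : ℕ) : Matrix (Fin g ⊕ Fin g) (Fin g ⊕ Fin g) ℤ := fromBlocks 0 1 (-1) 0

/-- `Sp(2g, ℤ)` as a set of integer matrices. -/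
def SpSet (g : ℕ) : Set (Matrix (Fin g ⊕ Fin g) (Fin g ⊕ Fin g) ℤ) :=
  {X | IsUnit X.det ∧ Xᵀ * Jmat g * X = Jmat g}

/-- `urSp(2g)`: symplectic matrices with vanishing lower-left `g × g` block. -/
def urSpSet (g : ℕ) : Set (Matrix (Fin g ⊕ Fin g) (Fin g ⊕ Fin g) ℤ) :=
  {X | X ∈ SpSet g ∧ X.toBlocks₂₁ = 0}

/-- The explicit description: matrices `[[A, B],[0, ᵗA⁻¹]]` with `A` unimodular and
`A⁻¹ * B` symmetric. -/
def urSpSet' (g : ℕ) : Set (Matrix (Fin g ⊕ Fin g) (Fin g ⊕ Fin g) ℤ) :=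
  {X | ∃ A B : Matrix (Fin g) (Fin g) ℤ, IsUnit A.det ∧ (A⁻¹ * B).IsSymm ∧
    X = fromBlocks A B 0 (A⁻¹)ᵀ}

/-- `S_{i,j}`: the symmetric matrix with `1` at `(i,j)` and `(j,i)` and `0` elsewhere
(just a `1` at `(i,i)` when `i = j`). -/
def Smat (g : ℕ) (i j : Fin g) : Matrix (Fin g) (Fin g) ℤ :=
  Matrix.of fun k l => if (k = i ∧ l = j) ∨ (k = j ∧ l = i) then 1 else 0

/-- The elementary matrix `E_{i,j} = I + ℰ_{i,j}`. -/
def Emat (g : ℕ) (i j : Fin g) : Matrix (Fin g) (Fin g) ℤ := 1 + Matrix.single i j 1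

/-- `F_i = I - 2 S_{i,i}`. -/
def Fmat (g : ℕ) (i : Fin g) : Matrix (Fin g) (Fin g) ℤ := 1 - 2 • Matrix.single i i 1

/-- `A_{i,j} = I + S_{i,j} - S_{i,i} - S_{j,j}`, the transposition permutation matrix. -/
def Amat (g : ℕ) (i j : Fin g) : Matrix (Fin g) (Fin g) ℤ :=
  1 + Smat g i j - Smat g i i - Smat g j j

/-- `Y_{i,j} = [[I, S_{i,j}],[0, I]]`. -/
def Ymat (g : ℕ) (i j : Fin g) : Matrix (Fin g ⊕ Fin g) (Fin g ⊕ Fin g) ℤ :=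
  fromBlocks 1 (Smat g i j) 0 1

/-- `X_{i,j} = [[E_{i,j}, 0],[0, ᵗE_{i,j}⁻¹]]` (the paper's `-E_{j,i}` denotes `ᵗE_{i,j}⁻¹`). -/
noncomputable def Xmat (g : ℕ) (i j : Fin g) : Matrix (Fin g ⊕ Fin g) (Fin g ⊕ Fin g) ℤ :=
  fromBlocks (Emat g i j) 0 0 ((Emat g i j)⁻¹)ᵀ

/-- `Z_i = [[F_i, 0],[0, F_i]]`. -/
def Zmat (g : ℕ) (i : Fin g) : Matrix (Fin g ⊕ Fin g) (Fin g ⊕ Fin g) ℤ :=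
  fromBlocks (Fmat g i) 0 0 (Fmat g i)

/-- `S_g = {[[I, B],[0, I]] : B symmetric}`. -/
def SgSet (g : ℕ) : Set (Matrix (Fin g ⊕ Fin g) (Fin g ⊕ Fin g) ℤ) :=
  {X | ∃ B : Matrix (Fin g) (Fin g) ℤ, B.IsSymm ∧ X = fromBlocks 1 B 0 1}

/-- `GL(g, ℤ)` as the set of integer matrices with unit determinant. -/
def GLSet (g : ℕ) : Set (Matrix (Fin g) (Fin g) ℤ) := {X | IsUnit X.det}

/-- The level-`d` principal congruence subgroup `Γ_d(g)` of `GL(g, ℤ)`. -/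
def GammaSet (d g : ℕ) : Set (Matrix (Fin g) (Fin g) ℤ) :=
  {X | IsUnit X.det ∧ X.map (fun a : ℤ => (a : ZMod d)) = 1}

/-- The normal closure of `S` in the group `U` (a subset of invertible matrices),
described as the set of products of `U`-conjugates of elements of `S` and their inverses. -/
def ncl {n : Type*} [Fintype n] [DecidableEq n]
    (U S : Set (Matrix n n ℤ)) : Set (Matrix n n ℤ) :=
  ↑(Submonoid.closure {m | ∃ u ∈ U, ∃ y ∈ S, m = u * y * u⁻¹ ∨ m = u * y⁻¹ * u⁻¹})

section SiegelParabolic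

variable {n R : Type*} [DecidableEq n] [CommRing R]

def siegelUnip (C : Matrix n n R) : Matrix (n ⊕ n) (n ⊕ n) R := fromBlocks 1 C 0 1

@[simp]
lemma siegelUnip_zero : siegelUnip (0 : Matrix n n R) = 1 := by
  simp [siegelUnip]

variable [Fintype n]

lemma map_nonsing_inv {m S F : Type*} [Fintype m] [DecidableEq m] [CommRing S]
    [FunLike F (Matrix n n R) (Matrix m m S)] [MonoidHomClass F (Matrix n n R) (Matrix m m S)]
    (f : F) {A : Matrix n n R} (hA : IsUnit A.det) :
    f A⁻¹ = (f A)⁻¹ :=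
  (inv_eq_right_inv (by rw [← map_mul, mul_nonsing_inv _ hA, map_one])).symm

-- Multiplicative even on singular matrices, since `Matrix.mul_inv_rev` is unconditional.
noncomputable def siegelLevi : Matrix n n R →* Matrix (n ⊕ n) (n ⊕ n) R where
  toFun P := fromBlocks P 0 0 (P⁻¹)ᵀ
  map_one' := by simp
  map_mul' P Q := by simp [fromBlocks_multiply, Matrix.mul_inv_rev]

lemma siegelLevi_apply (P : Matrix n n R) : siegelLevi P = fromBlocks P 0 0 (P⁻¹)ᵀ := rfl

lemma siegelUnip_add (C C' : Matrix n n R) :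
    siegelUnip (C + C') = siegelUnip C * siegelUnip C' := by
  simp [siegelUnip, fromBlocks_multiply, add_comm]

lemma siegelUnip_neg (C : Matrix n n R) : siegelUnip (-C) = (siegelUnip C)⁻¹ :=
  (inv_eq_right_inv (by rw [← siegelUnip_add, add_neg_cancel, siegelUnip_zero])).symm

lemma siegelUnip_nsmul (k : ℕ) (C : Matrix n n R) : siegelUnip (k • C) = siegelUnip C ^ k := by
  induction k with
  | zero => simp
  | succ k ih => rw [succ_nsmul, siegelUnip_add, ih, pow_succ]

lemma siegelLevi_mul_siegelUnip_mul_inv {P : Matrix n n R} (hP : IsUnit P.det)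
    (C : Matrix n n R) :
    siegelLevi P * siegelUnip C * (siegelLevi P)⁻¹ = siegelUnip (P * C * Pᵀ) := by
  rw [← map_nonsing_inv siegelLevi hP]
  simp [siegelLevi_apply, siegelUnip, fromBlocks_multiply, nonsing_inv_nonsing_inv _ hP,
    mul_nonsing_inv _ hP, ← transpose_mul, Matrix.mul_assoc]

lemma fromBlocks_eq_siegelLevi_mul_siegelUnip {A : Matrix n n R} (hA : IsUnit A.det)
    (B : Matrix n n R) :
    fromBlocks A B 0 (A⁻¹)ᵀ = siegelLevi A * siegelUnip (A⁻¹ * B) := by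
  simp [siegelLevi_apply, siegelUnip, fromBlocks_multiply, mul_nonsing_inv_cancel_left _ _ hA]

lemma RingHom.mapMatrix_siegelLevi {S : Type*} [CommRing S] (f : R →+* S)
    {A : Matrix n n R} (hA : IsUnit A.det) :
    f.mapMatrix (siegelLevi A) = siegelLevi (f.mapMatrix A) := by
  rw [siegelLevi_apply, siegelLevi_apply, ← map_nonsing_inv f.mapMatrix hA]
  simp [RingHom.mapMatrix_apply, fromBlocks_map, transpose_map]

lemma RingHom.mapMatrix_siegelUnip {S : Type*} [CommRing S] (f : R →+* S) (C : Matrix n n R) :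
    f.mapMatrix (siegelUnip C) = siegelUnip (f.mapMatrix C) := by
  simp [siegelUnip, RingHom.mapMatrix_apply, fromBlocks_map]

end SiegelParabolic

section NormalClosure

variable {n m : Type*} [Fintype n] [DecidableEq n] [Fintype m] [DecidableEq m]
  {U S : Set (Matrix n n ℤ)} {u y : Matrix n n ℤ}

lemma conj_mem_ncl (hu : u ∈ U) (hy : y ∈ S) : u * y * u⁻¹ ∈ ncl U S :=
  Submonoid.subset_closure ⟨u, hu, y, hy, Or.inl rfl⟩

lemma conj_inv_mem_ncl (hu : u ∈ U) (hy : y ∈ S) : u * y⁻¹ * u⁻¹ ∈ ncl U S :=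
  Submonoid.subset_closure ⟨u, hu, y, hy, Or.inr rfl⟩

lemma one_mem_ncl : 1 ∈ ncl U S :=
  Submonoid.one_mem _

lemma mul_mem_ncl {a b : Matrix n n ℤ} (ha : a ∈ ncl U S) (hb : b ∈ ncl U S) :
    a * b ∈ ncl U S :=
  Submonoid.mul_mem _ ha hb

lemma ncl_subset {K : Submonoid (Matrix n n ℤ)}
    (h : ∀ u ∈ U, ∀ y ∈ S, u * y * u⁻¹ ∈ K ∧ u * y⁻¹ * u⁻¹ ∈ K) : ncl U S ⊆ K := by
  refine Submonoid.closure_le.2 ?_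
  rintro _ ⟨u, hu, y, hy, rfl | rfl⟩
  exacts [(h u hu y hy).1, (h u hu y hy).2]

lemma mapsTo_ncl (f : Matrix n n ℤ →* Matrix m m ℤ) {U' S' : Set (Matrix m m ℤ)}
    (hU : ∀ u ∈ U, IsUnit u.det) (hS : ∀ y ∈ S, IsUnit y.det)
    (hfU : Set.MapsTo f U U') (hfS : Set.MapsTo f S S') :
    Set.MapsTo f (ncl U S) (ncl U' S') := by
  refine ncl_subset (K := (Submonoid.closure _).comap f) fun u hu y hy => ?_
  simp only [Submonoid.mem_comap, map_mul, map_nonsing_inv f (hU u hu),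
    map_nonsing_inv f (hS y hy)]
  exact ⟨conj_mem_ncl (hfU hu) (hfS hy), conj_inv_mem_ncl (hfU hu) (hfS hy)⟩

lemma siegelUnip_mem_ncl_of_mem_closure {U S : Set (Matrix (n ⊕ n) (n ⊕ n) ℤ)}
    {T : Set (Matrix n n ℤ)}
    (hT : ∀ t ∈ T, siegelUnip t ∈ ncl U S ∧ siegelUnip (-t) ∈ ncl U S) {C : Matrix n n ℤ}
    (hC : C ∈ AddSubgroup.closure T) : siegelUnip C ∈ ncl U S := by
  suffices siegelUnip C ∈ ncl U S ∧ siegelUnip (-C) ∈ ncl U S from this.1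
  induction hC using AddSubgroup.closure_induction with
  | mem t ht => exact hT t ht
  | zero => simpa using one_mem_ncl
  | add a b _ _ ha hb =>
    rw [siegelUnip_add, neg_add_rev, siegelUnip_add]
    exact ⟨mul_mem_ncl ha.1 hb.1, mul_mem_ncl hb.2 ha.2⟩
  | neg a _ ha =>
    rw [neg_neg]
    exact ha.symm

end NormalClosure

section UpperTriangularSymplectic

variable {g : ℕ}

def urSp (g : ℕ) : Submonoid (Matrix (Fin g ⊕ Fin g) (Fin g ⊕ Fin g) ℤ) where
  carrier := urSpSet g
  one_mem' := ⟨⟨by simp, by simp⟩, toBlocks₂₁_diagonal _⟩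
  mul_mem' := by
    rintro X Y ⟨⟨hXdet, hX⟩, hX₂₁⟩ ⟨⟨hYdet, hY⟩, hY₂₁⟩
    refine ⟨⟨by simpa only [det_mul] using hXdet.mul hYdet, ?_⟩, ?_⟩
    · rw [transpose_mul, Matrix.mul_assoc, Matrix.mul_assoc, ← Matrix.mul_assoc (Jmat g),
        ← Matrix.mul_assoc Xᵀ, ← Matrix.mul_assoc Xᵀ, hX, ← Matrix.mul_assoc, hY]
    · rw [← fromBlocks_toBlocks X, ← fromBlocks_toBlocks Y, hX₂₁, hY₂₁, fromBlocks_multiply]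
      simp

lemma urSpSet_eq_urSpSet' (g : ℕ) : urSpSet g = urSpSet' g := by
  ext X
  constructor
  · rintro ⟨⟨-, hJ⟩, h₂₁⟩
    set A := X.toBlocks₁₁
    set B := X.toBlocks₁₂
    set D := X.toBlocks₂₂
    have hX : X = fromBlocks A B 0 D := by rw [← h₂₁, fromBlocks_toBlocks]
    rw [hX] at hJ
    simp only [Jmat, fromBlocks_transpose, fromBlocks_multiply, Matrix.mul_zero, Matrix.zero_mul,
      Matrix.mul_one, Matrix.mul_neg, Matrix.neg_mul, add_zero, zero_add, transpose_zero,
      neg_zero] at hJ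
    obtain ⟨-, hAD, -, hBD⟩ := fromBlocks_inj.1 hJ
    have hA : IsUnit A.det := by
      simpa using isUnit_det_of_right_inverse hAD
    have hD : D = (A⁻¹)ᵀ := by rw [transpose_nonsing_inv, inv_eq_right_inv hAD]
    refine ⟨A, B, hA, ?_, by rw [hX, hD]⟩
    rw [IsSymm, transpose_mul, ← hD, ← neg_add_eq_zero.1 hBD, hD, transpose_transpose]
  · rintro ⟨A, B, hA, hAB, rfl⟩
    refine ⟨⟨?_, ?_⟩, toBlocks_fromBlocks₂₁ _ _ _ _⟩
    · rw [det_fromBlocks_zero₂₁, det_transpose]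
      exact hA.mul (isUnit_nonsing_inv_det _ hA)
    · simp only [Jmat, fromBlocks_transpose, fromBlocks_multiply, Matrix.mul_zero,
        Matrix.zero_mul, Matrix.mul_one, Matrix.mul_neg, Matrix.neg_mul,
        add_zero, zero_add, transpose_zero, transpose_transpose, neg_zero,
        nonsing_inv_mul _ hA, ← transpose_mul, transpose_one]
      rw [hAB.eq, neg_add_cancel]

lemma siegelLevi_mem_urSpSet {A : Matrix (Fin g) (Fin g) ℤ} (hA : IsUnit A.det) :
    siegelLevi A ∈ urSpSet g := by
  rw [urSpSet_eq_urSpSet']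
  exact ⟨A, 0, hA, by simp [IsSymm], rfl⟩

lemma siegelUnip_mem_urSpSet {C : Matrix (Fin g) (Fin g) ℤ} (hC : C.IsSymm) :
    siegelUnip C ∈ urSpSet g := by
  rw [urSpSet_eq_urSpSet']
  exact ⟨1, C, by simp, by simpa using hC, by simp [siegelUnip]⟩

lemma inv_mem_urSpSet {X : Matrix (Fin g ⊕ Fin g) (Fin g ⊕ Fin g) ℤ} (hX : X ∈ urSpSet g) :
    X⁻¹ ∈ urSpSet g := by
  obtain ⟨A, B, hA, hAB, rfl⟩ := urSpSet_eq_urSpSet' g ▸ hX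
  rw [fromBlocks_eq_siegelLevi_mul_siegelUnip hA, Matrix.mul_inv_rev, ← siegelUnip_neg,
    ← map_nonsing_inv siegelLevi hA]
  exact (urSp g).mul_mem (siegelUnip_mem_urSpSet hAB.neg)
    (siegelLevi_mem_urSpSet (isUnit_nonsing_inv_det _ hA))

end UpperTriangularSymplectic

section SymmetricMatrices

variable {n : Type*} [Fintype n]

lemma mul_vecMulVec_mul_transpose {R : Type*} [CommRing R] (P : Matrix n n R) (x y : n → R) :
    P * vecMulVec x y * Pᵀ = vecMulVec (P *ᵥ x) (P *ᵥ y) := by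
  rw [mul_vecMulVec, vecMulVec_mul, vecMul_transpose]

variable [DecidableEq n]

lemma exists_isSymm_eq_smul_of_mapMatrix_eq_zero {d : ℕ} {C : Matrix n n ℤ} (hC : C.IsSymm)
    (h : (Int.castRingHom (ZMod d)).mapMatrix C = 0) :
    ∃ M : Matrix n n ℤ, M.IsSymm ∧ C = (d : ℤ) • M := by
  have hdvd (i j : n) : (d : ℤ) ∣ C i j :=
    (CharP.intCast_eq_zero_iff (ZMod d) d _).1 (congrFun (congrFun h i) j)
  refine ⟨C.map (· / (d : ℤ)), ?_, ?_⟩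
  · rw [IsSymm, ← transpose_map, hC.eq]
  · ext i j
    simp [Int.mul_ediv_cancel' (hdvd i j)]

variable {R : Type*} [CommRing R]

lemma exists_isUnit_det_mulVec_single_eq_single (i₀ i : n) :
    ∃ P : Matrix n n R, IsUnit P.det ∧ P *ᵥ Pi.single i₀ 1 = Pi.single i 1 :=
  ⟨swap R i₀ i, isUnit_det_of_right_inverse (swap_mul_self _ _), by
    rw [swap_mulVec, Pi.single_comp_equiv, Equiv.symm_swap, Equiv.swap_apply_left]⟩

lemma exists_isUnit_det_mulVec_single_eq_single_add_single (i₀ : n) {i j : n} (hij : i ≠ j) :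
    ∃ P : Matrix n n R, IsUnit P.det ∧ P *ᵥ Pi.single i₀ 1 = Pi.single i 1 + Pi.single j 1 := by
  obtain ⟨Q, hQ, hQv⟩ := exists_isUnit_det_mulVec_single_eq_single (R := R) i₀ i
  refine ⟨transvection j i 1 * Q, ?_, ?_⟩
  · rwa [det_mul, det_transvection_of_ne _ _ hij.symm, one_mul]
  · rw [← mulVec_mulVec, hQv, transvection, add_mulVec, one_mulVec, single_mulVec_eq]
    simp

end SymmetricMatrices

section SymmetricSpan

variable {n : Type*} [Fintype n] [LinearOrder n]

lemma smul_mem_of_isSymm {G : AddSubgroup (Matrix n n ℤ)} {c : ℤ}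
    (hdiag : ∀ i, single i i c ∈ G) (hoff : ∀ i j, i < j → single i j c + single j i c ∈ G)
    {M : Matrix n n ℤ} (hM : M.IsSymm) : c • M ∈ G := by
  set U : Matrix n n ℤ := of fun i j => if i < j then M i j else 0
  have hMU : M = U + Uᵀ + diagonal fun i => M i i := by
    ext k l
    rcases lt_trichotomy k l with h | rfl | h
    · simp [U, h, h.ne, h.not_gt]
    · simp [U]
    · simp [U, h, h.ne', h.not_gt, hM.apply]
  have hUU : c • (U + Uᵀ) = ∑ i, ∑ j, U i j • (single i j c + single j i c) := by
    conv_lhs => rw [matrix_eq_sum_single U]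
    simp [transpose_sum, Finset.smul_sum, ← Finset.sum_add_distrib, mul_comm]
  rw [hMU, smul_add, hUU, ← sum_single_eq_diagonal, Finset.smul_sum]
  refine add_mem (sum_mem fun i _ => sum_mem fun j _ => ?_) (sum_mem fun i _ => ?_)
  · by_cases h : i < j
    · exact zsmul_mem (hoff i j h) _
    · simp [U, h]
  · simpa [mul_comm] using zsmul_mem (hdiag i) (M i i)

lemma smul_mem_of_isSymm_of_vecMulVec_mem {G : AddSubgroup (Matrix n n ℤ)} {c : ℤ} (i₀ : n)
    (hG : ∀ P : Matrix n n ℤ, IsUnit P.det →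
      c • vecMulVec (P *ᵥ Pi.single i₀ 1) (P *ᵥ Pi.single i₀ 1) ∈ G)
    {M : Matrix n n ℤ} (hM : M.IsSymm) : c • M ∈ G := by
  have hdiag (i : n) : single i i c ∈ G := by
    obtain ⟨P, hP, hPv⟩ := exists_isUnit_det_mulVec_single_eq_single (R := ℤ) i₀ i
    simpa [hPv, ← single_eq_single_vecMulVec_single] using hG P hP
  refine smul_mem_of_isSymm hdiag (fun i j hij => ?_) hM
  obtain ⟨P, hP, hPv⟩ := exists_isUnit_det_mulVec_single_eq_single_add_single (R := ℤ) i₀ hij.ne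
  have h := sub_mem (sub_mem (hG P hP) (hdiag i)) (hdiag j)
  rw [hPv, vecMulVec_add, add_vecMulVec, add_vecMulVec] at h
  convert h using 1
  simp only [← single_eq_single_vecMulVec_single, smul_add, smul_single, smul_eq_mul, mul_one]
  abel

end SymmetricSpan

section CongruenceLevel

variable {g d : ℕ}

lemma Smat_isSymm (i j : Fin g) : (Smat g i j).IsSymm := by
  ext k l
  simp [Smat, or_comm, and_comm]

lemma Smat_self_eq_vecMulVec (i : Fin g) :
    Smat g i i = vecMulVec (Pi.single i 1) (Pi.single i 1) := by
  rw [← single_eq_single_vecMulVec_single]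
  ext k l
  simp [Smat, single_apply, eq_comm]

lemma Emat_pow {i j : Fin g} (h : i ≠ j) (k : ℕ) : Emat g i j ^ k = transvection i j (k : ℤ) := by
  induction k with
  | zero => simp
  | succ k ih =>
    rw [pow_succ, ih, Emat, ← transvection, transvection_mul_transvection_same _ _ h]
    push_cast
    rfl

lemma isUnit_det_Emat_pow {i j : Fin g} (h : i ≠ j) (k : ℕ) : IsUnit (Emat g i j ^ k).det := by
  rw [Emat_pow h, det_transvection_of_ne _ _ h]
  exact isUnit_one

lemma Xmat_pow_eq_siegelLevi (i j : Fin g) (k : ℕ) : Xmat g i j ^ k = siegelLevi (Emat g i j ^ k) :=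
  (map_pow (siegelLevi (n := Fin g) (R := ℤ)) _ k).symm

lemma Ymat_pow_eq_siegelUnip (i j : Fin g) (k : ℕ) :
    Ymat g i j ^ k = siegelUnip ((k : ℤ) • Smat g i j) := by
  rw [natCast_zsmul, siegelUnip_nsmul]
  rfl

def urSpLevel (g d : ℕ) : Submonoid (Matrix (Fin g ⊕ Fin g) (Fin g ⊕ Fin g) ℤ) :=
  urSp g ⊓ MonoidHom.mker (Int.castRingHom (ZMod d)).mapMatrix

lemma mem_urSpLevel {X : Matrix (Fin g ⊕ Fin g) (Fin g ⊕ Fin g) ℤ} :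
    X ∈ urSpLevel g d ↔ X ∈ urSpSet g ∧ (Int.castRingHom (ZMod d)).mapMatrix X = 1 :=
  Iff.rfl

lemma conj_mem_urSpLevel {u y : Matrix (Fin g ⊕ Fin g) (Fin g ⊕ Fin g) ℤ} (hu : u ∈ urSpSet g)
    (hy : y ∈ urSpLevel g d) : u * y * u⁻¹ ∈ urSpLevel g d := by
  rw [mem_urSpLevel] at hy ⊢
  refine ⟨(urSp g).mul_mem ((urSp g).mul_mem hu hy.1) (inv_mem_urSpSet hu), ?_⟩
  rw [map_mul, map_mul, hy.2, mul_one, ← map_mul, mul_nonsing_inv _ hu.1.1, map_one]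

lemma inv_mem_urSpLevel {y : Matrix (Fin g ⊕ Fin g) (Fin g ⊕ Fin g) ℤ}
    (hy : y ∈ urSpLevel g d) : y⁻¹ ∈ urSpLevel g d := by
  rw [mem_urSpLevel] at hy ⊢
  refine ⟨inv_mem_urSpSet hy.1, ?_⟩
  rw [map_nonsing_inv _ hy.1.1.1, hy.2, inv_one]

lemma Xmat_pow_mem_urSpLevel {i j : Fin g} (h : i ≠ j) : Xmat g i j ^ d ∈ urSpLevel g d := by
  rw [mem_urSpLevel, Xmat_pow_eq_siegelLevi]
  refine ⟨siegelLevi_mem_urSpSet (isUnit_det_Emat_pow h d), ?_⟩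
  rw [RingHom.mapMatrix_siegelLevi _ (isUnit_det_Emat_pow h d),
    Emat_pow h, transvection, map_add, map_one, RingHom.mapMatrix_apply, map_single]
  simp

lemma Ymat_pow_mem_urSpLevel (i j : Fin g) : Ymat g i j ^ d ∈ urSpLevel g d := by
  rw [mem_urSpLevel, Ymat_pow_eq_siegelUnip]
  refine ⟨siegelUnip_mem_urSpSet ((Smat_isSymm i j).smul _), ?_⟩
  rw [RingHom.mapMatrix_siegelUnip, map_zsmul, natCast_zsmul, ← Nat.cast_smul_eq_nsmul (ZMod d),
    ZMod.natCast_self, zero_smul, siegelUnip_zero]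

lemma ncl_subset_urSpLevel {i j : Fin g} (h : i ≠ j) (k l : Fin g) :
    ncl (urSpSet g) {Xmat g i j ^ d, Ymat g k l ^ d} ⊆ urSpLevel g d :=
  ncl_subset fun u hu y hy => by
    have hy' : y ∈ urSpLevel g d := by
      rcases hy with rfl | rfl
      exacts [Xmat_pow_mem_urSpLevel h, Ymat_pow_mem_urSpLevel k l]
    exact ⟨conj_mem_urSpLevel hu hy', conj_mem_urSpLevel hu (inv_mem_urSpLevel hy')⟩

lemma siegelLevi_mem_ncl {i j : Fin g} (h : i ≠ j) (k l : Fin g)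
    (hGamma : GammaSet d g = ncl (GLSet g) {Emat g i j ^ d}) {A : Matrix (Fin g) (Fin g) ℤ}
    (hA : A ∈ GammaSet d g) :
    siegelLevi A ∈ ncl (urSpSet g) {Xmat g i j ^ d, Ymat g k l ^ d} := by
  rw [hGamma] at hA
  refine mapsTo_ncl siegelLevi (fun u hu => hu) ?_ (fun u hu => siegelLevi_mem_urSpSet hu) ?_ hA
  · rintro _ rfl
    exact isUnit_det_Emat_pow h d
  · rintro _ rfl
    exact Or.inl (Xmat_pow_eq_siegelLevi i j d).symm

lemma siegelUnip_smul_vecMulVec_mem_ncl {P : Matrix (Fin g) (Fin g) ℤ} (hP : IsUnit P.det)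
    (i j : Fin g) {C : Matrix (Fin g) (Fin g) ℤ}
    (hC : C = (d : ℤ) • vecMulVec (P *ᵥ Pi.single i 1) (P *ᵥ Pi.single i 1)) :
    siegelUnip C ∈ ncl (urSpSet g) {Xmat g i j ^ d, Ymat g i i ^ d} ∧
      siegelUnip (-C) ∈ ncl (urSpSet g) {Xmat g i j ^ d, Ymat g i i ^ d} := by
  have hPC : P * ((d : ℤ) • Smat g i i) * Pᵀ = C := by
    rw [hC, Matrix.mul_smul, Matrix.smul_mul, Smat_self_eq_vecMulVec, mul_vecMulVec_mul_transpose]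
  constructor
  · rw [← hPC, ← siegelLevi_mul_siegelUnip_mul_inv hP, ← Ymat_pow_eq_siegelUnip]
    exact conj_mem_ncl (siegelLevi_mem_urSpSet hP) (Or.inr rfl)
  · rw [← hPC, ← Matrix.neg_mul, ← Matrix.mul_neg, ← siegelLevi_mul_siegelUnip_mul_inv hP,
      siegelUnip_neg, ← Ymat_pow_eq_siegelUnip]
    exact conj_inv_mem_ncl (siegelLevi_mem_urSpSet hP) (Or.inr rfl)

lemma siegelUnip_mem_ncl {C : Matrix (Fin g) (Fin g) ℤ} (hC : C.IsSymm)
    (hCd : (Int.castRingHom (ZMod d)).mapMatrix C = 0) (i j : Fin g) :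
    siegelUnip C ∈ ncl (urSpSet g) {Xmat g i j ^ d, Ymat g i i ^ d} := by
  obtain ⟨M, hM, rfl⟩ := exists_isSymm_eq_smul_of_mapMatrix_eq_zero hC hCd
  set T : Set (Matrix (Fin g) (Fin g) ℤ) := {C | ∃ P, IsUnit P.det ∧
    C = (d : ℤ) • vecMulVec (P *ᵥ Pi.single i 1) (P *ᵥ Pi.single i 1)}
  refine siegelUnip_mem_ncl_of_mem_closure (T := T) ?_
    (smul_mem_of_isSymm_of_vecMulVec_mem (G := AddSubgroup.closure T) i
      (fun P hP => AddSubgroup.subset_closure ⟨P, hP, rfl⟩) hM)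
  rintro _ ⟨P, hP, hC⟩
  exact siegelUnip_smul_vecMulVec_mem_ncl hP i j hC

lemma urSpLevel_subset_ncl {i j : Fin g} (h : i ≠ j)
    (hGamma : GammaSet d g = ncl (GLSet g) {Emat g i j ^ d}) :
    ↑(urSpLevel g d) ⊆ ncl (urSpSet g) {Xmat g i j ^ d, Ymat g i i ^ d} := by
  intro X hX
  obtain ⟨hXur, hXd⟩ := mem_urSpLevel.1 hX
  obtain ⟨A, B, hA, hAB, rfl⟩ := urSpSet_eq_urSpSet' g ▸ hXur
  rw [RingHom.mapMatrix_apply, fromBlocks_map, ← fromBlocks_one, fromBlocks_inj] at hXd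
  obtain ⟨hA1, hB0, -, -⟩ := hXd
  rw [fromBlocks_eq_siegelLevi_mul_siegelUnip hA]
  refine mul_mem_ncl (siegelLevi_mem_ncl h i i hGamma ⟨hA, hA1⟩) (siegelUnip_mem_ncl hAB ?_ i j)
  rw [map_mul, RingHom.mapMatrix_apply _ B, hB0, mul_zero]

end CongruenceLevel

/-- For `g ≥ 3`, `d ≥ 3`: if `Γ_d(g)` is the normal closure of `E_{1,2}^d` in `GL(g, ℤ)`
(Bass–Milnor–Serre), then `urSp(2g)[d]` is the normal closure of `X_{1,2}^d` and
`Y_{1,1}^d` in `urSp(2g)`. -/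
theorem stmt15 (g d : ℕ) (hg : 3 ≤ g)
    (hGamma : GammaSet d g = ncl (GLSet g) {Emat g ⟨0, by omega⟩ ⟨1, by omega⟩ ^ d}) :
    {X | X ∈ urSpSet g ∧ X.map (fun a : ℤ => (a : ZMod d)) = 1} =
      ncl (urSpSet g)
        {Xmat g ⟨0, by omega⟩ ⟨1, by omega⟩ ^ d,
         Ymat g ⟨0, by omega⟩ ⟨0, by omega⟩ ^ d} := by
  have h01 : (⟨0, by omega⟩ : Fin g) ≠ ⟨1, by omega⟩ := by simp
  exact (urSpLevel_subset_ncl h01 hGamma).antisymm (ncl_subset_urSpLevel h01 _ _)
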